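/- arXiv:1609.05267 — 5 statements merged into one kernel-verified Lean document; each statement's English description precedes it below -/
import Mathlib

section
/- Let f : ℝⁿ → ℝⁿ be a polynomial map with f(0) = 0, degree m−1 (m ≥ 2) and leading term f^∞. If SOL(f^∞, 0) = {0}, then for every bounded set K ⊆ ℝⁿ the set ⋃_{q ∈ K} SOL(f, q) is bounded. -/
/-!
Write `x ∈ SOL(f, q)` with `t = ‖x‖ > 1`. Homogeneity of `f^∞` turns the complementarity system
into `x / t ∈ SOL(f^∞, e)` with `e = t^{-(m-1)} (f x - f^∞ x + q)`, and the degree bound on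
`f - f^∞` gives `‖e‖ ≤ (C + ‖q‖) / t`. The set of pairs `(e, y)` with `y ∈ SOL(f^∞, e)` is closed
and, as `SOL(f^∞, 0) = {0}`, misses `{0} × S` for the unit sphere `S`; compactness of `S` yields
`ε > 0` such that `SOL(f^∞, e)` misses `S` whenever `‖e‖ < ε`. Hence `t ≤ (C + ‖q‖) / ε`.
-/


open Finset

/-- The solution set of the (nonlinear/polynomial) complementarity problem for the map `g`
and vector `q`: all `x ≥ 0` with `g x + q ≥ 0` and `⟨x, g x + q⟩ = 0`. -/
def SOL {n : ℕ} (g : (Fin n → ℝ) → (Fin n → ℝ)) (q : Fin n → ℝ) : Set (Fin n → ℝ) :=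
  {x | (∀ i, 0 ≤ x i) ∧ (∀ i, 0 ≤ g x i + q i) ∧ ∑ i, x i * (g x i + q i) = 0}

/-- `F` is a polynomial map each of whose components is homogeneous of degree `d`. -/
def IsHomogPolyMap {n : ℕ} (F : (Fin n → ℝ) → (Fin n → ℝ)) (d : ℕ) : Prop :=
  ∃ P : Fin n → MvPolynomial (Fin n) ℝ,
    (∀ x i, F x i = MvPolynomial.eval x (P i)) ∧ ∀ i, (P i).IsHomogeneous d

/-- `p` is a polynomial map each of whose components has total degree `< d`. -/
def IsPolyMapDegLT {n : ℕ} (p : (Fin n → ℝ) → (Fin n → ℝ)) (d : ℕ) : Prop :=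
  ∃ P : Fin n → MvPolynomial (Fin n) ℝ,
    (∀ x i, p x i = MvPolynomial.eval x (P i)) ∧ ∀ i, (P i).totalDegree < d

open MvPolynomial Filter Topology

namespace MvPolynomial

theorem IsHomogeneous.eval_smul {σ R : Type*} [CommSemiring R] {P : MvPolynomial σ R} {d : ℕ}
    (hP : P.IsHomogeneous d) (c : R) (x : σ → R) : eval (c • x) P = c ^ d * eval x P := by
  rw [eval_eq, eval_eq, mul_sum]
  refine sum_congr rfl fun s hs => ?_
  simp only [Pi.smul_apply, smul_eq_mul, mul_pow, prod_mul_distrib, prod_pow_eq_pow_sum,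
    ← hP.degree_eq_sum_deg_support hs]
  ring

theorem norm_eval_le {σ 𝕜 : Type*} [Fintype σ] [NormedField 𝕜] (P : MvPolynomial σ 𝕜)
    {x : σ → 𝕜} (hx : 1 ≤ ‖x‖) :
    ‖eval x P‖ ≤ (∑ s ∈ P.support, ‖P.coeff s‖) * ‖x‖ ^ P.totalDegree := by
  rw [eval_eq, sum_mul]
  refine (norm_sum_le _ _).trans (sum_le_sum fun s hs => ?_)
  rw [norm_mul, norm_prod]
  gcongr
  calc ∏ i ∈ s.support, ‖x i ^ s i‖ ≤ ∏ i ∈ s.support, ‖x‖ ^ s i := by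
        gcongr with i; rw [norm_pow]; gcongr; exact norm_le_pi_norm x i
    _ = ‖x‖ ^ ∑ i ∈ s.support, s i := prod_pow_eq_pow_sum _ _ _
    _ ≤ ‖x‖ ^ P.totalDegree := pow_le_pow_right₀ hx (le_totalDegree hs)

end MvPolynomial

theorem IsHomogPolyMap.continuous {n d : ℕ} {F : (Fin n → ℝ) → Fin n → ℝ}
    (hF : IsHomogPolyMap F d) : Continuous F := by
  obtain ⟨P, hPF, -⟩ := hF
  exact continuous_pi fun i => by simpa only [hPF] using continuous_eval (P i)

theorem IsHomogPolyMap.map_smul {n d : ℕ} {F : (Fin n → ℝ) → Fin n → ℝ}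
    (hF : IsHomogPolyMap F d) (c : ℝ) (x : Fin n → ℝ) : F (c • x) = c ^ d • F x := by
  obtain ⟨P, hPF, hP⟩ := hF
  ext i
  simp only [hPF, (hP i).eval_smul, Pi.smul_apply, smul_eq_mul]

theorem IsPolyMapDegLT.exists_norm_le {n d : ℕ} {p : (Fin n → ℝ) → Fin n → ℝ}
    (hp : IsPolyMapDegLT p d) : ∃ C, ∀ x, 1 ≤ ‖x‖ → ‖p x‖ ≤ C * ‖x‖ ^ (d - 1) := by
  obtain ⟨P, hPp, hP⟩ := hp
  set C : Fin n → ℝ := fun i => ∑ s ∈ (P i).support, ‖(P i).coeff s‖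
  refine ⟨∑ i, C i, fun x hx => (pi_norm_le_iff_of_nonneg (by positivity)).2 fun i => ?_⟩
  calc ‖p x i‖ ≤ C i * ‖x‖ ^ (P i).totalDegree := by rw [hPp]; exact norm_eval_le _ hx
    _ ≤ (∑ j, C j) * ‖x‖ ^ (d - 1) := by
      have hCi : C i ≤ ∑ j, C j := single_le_sum (fun j _ => by positivity) (mem_univ i)
      have hdeg : (P i).totalDegree ≤ d - 1 := by have := hP i; omega
      gcongr

section SOL

variable {n d : ℕ} {f F : (Fin n → ℝ) → Fin n → ℝ}

theorem isClosed_setOf_mem_SOL (hF : Continuous F) :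
    IsClosed {p : (Fin n → ℝ) × (Fin n → ℝ) | p.2 ∈ SOL F p.1} := by
  have hset : {p : (Fin n → ℝ) × (Fin n → ℝ) | p.2 ∈ SOL F p.1} =
      (⋂ i, {p | 0 ≤ p.2 i}) ∩ (⋂ i, {p | 0 ≤ F p.2 i + p.1 i}) ∩
        {p | ∑ i, p.2 i * (F p.2 i + p.1 i) = 0} := by
    ext; simp [SOL, and_assoc]
  rw [hset]
  refine .inter (.inter (isClosed_iInter fun i => isClosed_le ?_ ?_)
    (isClosed_iInter fun i => isClosed_le ?_ ?_)) (isClosed_eq ?_ ?_) <;> fun_prop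

theorem inv_smul_mem_SOL (hF : ∀ c : ℝ, 0 < c → ∀ x, F (c • x) = c ^ d • F x) {x q : Fin n → ℝ}
    (hx : x ∈ SOL f q) {t : ℝ} (ht : 0 < t) :
    t⁻¹ • x ∈ SOL F ((t ^ d)⁻¹ • (f x - F x + q)) := by
  obtain ⟨hx0, hfx, hsum⟩ := hx
  have hFt : ∀ i, F (t⁻¹ • x) i + ((t ^ d)⁻¹ • (f x - F x + q)) i =
      (t ^ d)⁻¹ * (f x i + q i) := by
    intro i
    simp only [hF t⁻¹ (inv_pos.2 ht), Pi.smul_apply, Pi.add_apply, Pi.sub_apply, smul_eq_mul,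
      inv_pow]
    ring
  refine ⟨fun i => mul_nonneg (inv_nonneg.2 ht.le) (hx0 i),
    fun i => hFt i ▸ mul_nonneg (by positivity) (hfx i), ?_⟩
  simp_rw [hFt, Pi.smul_apply, smul_eq_mul]
  calc ∑ i, t⁻¹ * x i * ((t ^ d)⁻¹ * (f x i + q i))
      = t⁻¹ * (t ^ d)⁻¹ * ∑ i, x i * (f x i + q i) := by
        rw [mul_sum]; exact sum_congr rfl fun i _ => by ring
    _ = 0 := by rw [hsum, mul_zero]

theorem exists_pos_forall_norm_lt_disjoint_SOL_sphere (hF : Continuous F) (h0 : SOL F 0 = {0}) :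
    ∃ ε > 0, ∀ e : Fin n → ℝ, ‖e‖ < ε → Disjoint (SOL F e) (Metric.sphere 0 1) := by
  have hnear : ∀ y ∈ Metric.sphere (0 : Fin n → ℝ) 1,
      ∀ᶠ p : (Fin n → ℝ) × (Fin n → ℝ) in 𝓝 (0, y), p.2 ∉ SOL F p.1 := by
    intro y hy
    refine (isClosed_setOf_mem_SOL hF).isOpen_compl.mem_nhds fun hy0 => ?_
    have hy0' : y ∈ SOL F 0 := hy0
    rw [h0, Set.mem_singleton_iff] at hy0'
    simp [hy0'] at hy
  obtain ⟨ε, hε, hball⟩ := Metric.eventually_nhds_iff.1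
    ((isCompact_sphere (0 : Fin n → ℝ) 1).eventually_forall_of_forall_eventually
      (P := fun e y => y ∉ SOL F e) hnear)
  exact ⟨ε, hε, fun e he => Set.disjoint_right.2 fun y hy => hball (by simpa using he) y hy⟩

theorem isBounded_biUnion_SOL (hd : 1 ≤ d) (hFc : Continuous F)
    (hFhom : ∀ c : ℝ, 0 < c → ∀ x, F (c • x) = c ^ d • F x) (h0 : SOL F 0 = {0})
    {C : ℝ} (hfF : ∀ x, 1 ≤ ‖x‖ → ‖f x - F x‖ ≤ C * ‖x‖ ^ (d - 1))
    {K : Set (Fin n → ℝ)} (hK : Bornology.IsBounded K) :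
    Bornology.IsBounded (⋃ q ∈ K, SOL f q) := by
  obtain ⟨R, hR⟩ := isBounded_iff_forall_norm_le.1 hK
  obtain ⟨ε, hε, hdisj⟩ := exists_pos_forall_norm_lt_disjoint_SOL_sphere hFc h0
  refine isBounded_iff_forall_norm_le.2 ⟨max 1 ((C + R) / ε), ?_⟩
  simp only [Set.mem_iUnion]
  rintro x ⟨q, hq, hx⟩
  refine le_max_iff.2 (or_iff_not_imp_left.2 fun hx1 => ?_)
  rw [not_le] at hx1
  set t := ‖x‖
  have ht : 0 < t := one_pos.trans hx1
  have herr : ‖(t ^ d)⁻¹ • (f x - F x + q)‖ ≤ (C + R) / t := by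
    have hR0 : 0 ≤ R := (norm_nonneg q).trans (hR q hq)
    have hpow : t ^ d = t ^ (d - 1) * t := by rw [← pow_succ, Nat.sub_add_cancel hd]
    have hpow1 : 1 ≤ t ^ (d - 1) := one_le_pow₀ hx1.le
    rw [norm_smul, norm_inv, norm_pow, Real.norm_of_nonneg ht.le, hpow,
      inv_mul_le_iff₀ (by positivity)]
    calc ‖f x - F x + q‖ ≤ C * t ^ (d - 1) + R :=
          (norm_add_le _ _).trans (add_le_add (hfF x hx1.le) (hR q hq))
      _ ≤ C * t ^ (d - 1) + R * t ^ (d - 1) := by gcongr; exact le_mul_of_one_le_right hR0 hpow1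
      _ = t ^ (d - 1) * t * ((C + R) / t) := by field_simp
  have hlarge : ¬ ‖(t ^ d)⁻¹ • (f x - F x + q)‖ < ε := fun hsmall =>
    Set.disjoint_left.1 (hdisj _ hsmall) (inv_smul_mem_SOL hFhom hx ht) (by
      simp [norm_smul, t, ht.ne'])
  rw [le_div_iff₀ hε]
  exact (le_div_iff₀' ht).1 ((not_lt.1 hlarge).trans herr)

end SOL

theorem stmt_0_general {n m : ℕ} (hm : 2 ≤ m)
    (f F : (Fin n → ℝ) → (Fin n → ℝ))
    (hF : IsHomogPolyMap F (m - 1))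
    (hp : IsPolyMapDegLT (fun x => f x - F x) (m - 1))
    (hSOL : SOL F 0 = {0}) :
    ∀ K : Set (Fin n → ℝ), Bornology.IsBounded K →
      Bornology.IsBounded (⋃ q ∈ K, SOL f q) := by
  obtain ⟨C, hC⟩ := hp.exists_norm_le
  exact fun K hK => isBounded_biUnion_SOL (by omega) hF.continuous (fun c _ => hF.map_smul c)
    hSOL hC hK

theorem stmt_0 {n m : ℕ} (hm : 2 ≤ m)
    (f F : (Fin n → ℝ) → (Fin n → ℝ))
    (hF : IsHomogPolyMap F (m - 1)) (hFne : F ≠ 0)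
    (hp : IsPolyMapDegLT (fun x => f x - F x) (m - 1))
    (hf0 : f 0 = 0)
    (hSOL : SOL F 0 = {0}) :
    ∀ K : Set (Fin n → ℝ), Bornology.IsBounded K →
      Bornology.IsBounded (⋃ q ∈ K, SOL f q) :=
  stmt_0_general hm f F hF hp hSOL
end

section
/- Let F : ℝⁿ → ℝⁿ be a homogeneous polynomial map, let k be an odd natural number, and define G : ℝⁿ → ℝⁿ by G(x) = F(x)^{[k]} (componentwise k-th power). Then for every q ∈ ℝⁿ, SOL(G, q) = SOL(F, q^{[1/k]}). In particular, SOL(G, 0) = SOL(F, 0). -/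
open Finset

/-! Since `t ↦ t ^ k` is an odd strictly increasing bijection of `ℝ` for odd `k`, the sum
`F x i ^ k + q' i ^ k` has the same sign as `F x i + q' i`. The complementarity conditions
only see the signs of the components of `x` and of `g x + q`, so the two problems have the same
solutions. -/

section OddPow

variable {R : Type*} [Ring R] [LinearOrder R] [IsStrictOrderedRing R] {n : ℕ}

lemma Odd.pow_add_pow_nonneg_iff (hn : Odd n) {a b : R} :
    0 ≤ a ^ n + b ^ n ↔ 0 ≤ a + b := by
  rw [← neg_le_iff_add_nonneg, ← hn.neg_pow, hn.pow_le_pow, neg_le_iff_add_nonneg]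

lemma Odd.pow_add_pow_eq_zero_iff (hn : Odd n) {a b : R} :
    a ^ n + b ^ n = 0 ↔ a + b = 0 := by
  rw [add_eq_zero_iff_eq_neg, ← hn.neg_pow, hn.pow_inj, ← add_eq_zero_iff_eq_neg]

end OddPow

section SOL

variable {n : ℕ}

lemma mem_SOL_iff {g : (Fin n → ℝ) → (Fin n → ℝ)} {q x : Fin n → ℝ} :
    x ∈ SOL g q ↔ ∀ i, 0 ≤ x i ∧ 0 ≤ g x i + q i ∧ (x i = 0 ∨ g x i + q i = 0) := by
  simp only [SOL, Set.mem_ofPred_eq, forall_and]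
  refine and_congr_right fun hx => and_congr_right fun hgq => ?_
  rw [sum_eq_zero_iff_of_nonneg fun i _ => mul_nonneg (hx i) (hgq i)]
  simp only [mem_univ, true_implies, mul_eq_zero]

lemma SOL_congr {g g' : (Fin n → ℝ) → (Fin n → ℝ)} {q q' : Fin n → ℝ}
    (hle : ∀ x i, 0 ≤ g x i + q i ↔ 0 ≤ g' x i + q' i)
    (heq : ∀ x i, g x i + q i = 0 ↔ g' x i + q' i = 0) :
    SOL g q = SOL g' q' := by
  ext x
  simp only [mem_SOL_iff, hle, heq]

lemma SOL_pow_eq_of_pow_eq {k : ℕ} (hk : Odd k) (F : (Fin n → ℝ) → (Fin n → ℝ))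
    {q q' : Fin n → ℝ} (hq : ∀ i, q' i ^ k = q i) :
    SOL (fun x i => F x i ^ k) q = SOL F q' := by
  refine SOL_congr (fun x i => ?_) (fun x i => ?_)
  · rw [← hq i, hk.pow_add_pow_nonneg_iff]
  · rw [← hq i, hk.pow_add_pow_eq_zero_iff]

end SOL

theorem stmt_5_general {n k : ℕ} (hk : Odd k)
    (F : (Fin n → ℝ) → (Fin n → ℝ)) :
    (∀ q q' : Fin n → ℝ, (∀ i, q' i ^ k = q i) →
      SOL (fun x i => F x i ^ k) q = SOL F q') ∧
    SOL (fun x i => F x i ^ k) 0 = SOL F 0 :=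
  ⟨fun _ _ hq => SOL_pow_eq_of_pow_eq hk F hq,
    SOL_pow_eq_of_pow_eq hk F fun _ => zero_pow hk.pos.ne'⟩

/-- For a homogeneous polynomial map `F` and odd `k`, with `G x = (F x)^{[k]}`
(componentwise `k`-th power), `SOL(G, q) = SOL(F, q^{[1/k]})` for every `q`
(the `k`-th root `q'` of `q` is characterized by `q'^{[k]} = q`);
in particular `SOL(G, 0) = SOL(F, 0)`. -/
theorem stmt_5 {n d k : ℕ} (hd : 1 ≤ d) (hk : Odd k)
    (F : (Fin n → ℝ) → (Fin n → ℝ)) (hF : IsHomogPolyMap F d) :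
    (∀ q q' : Fin n → ℝ, (∀ i, q' i ^ k = q i) →
      SOL (fun x i => F x i ^ k) q = SOL F q') ∧
    SOL (fun x i => F x i ^ k) 0 = SOL F 0 :=
  stmt_5_general hk F
end

section
/- Let F : ℝⁿ → ℝⁿ be a homogeneous polynomial map of degree m−1 with m > 2, let e ∈ ℝⁿ be the vector of all ones, let d := −F(e) − e, let D be the diagonal matrix with diagonal d, and define f(x) := F(x) + Dx. Then both 0 and e belong to SOL(f, e); in particular, PCP(f, e) has at least two solutions. -/
open Finset

theorem MvPolynomial.IsHomogeneous.eval_zero {σ R : Type*} [CommSemiring R]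
    {φ : MvPolynomial σ R} {k : ℕ} (hφ : φ.IsHomogeneous k) (hk : k ≠ 0) :
    MvPolynomial.eval 0 φ = 0 := by
  rw [MvPolynomial.eval_zero, MvPolynomial.constantCoeff_eq]
  exact hφ.coeff_eq_zero (by simpa [eq_comm] using hk)

theorem IsHomogPolyMap.map_zero {n k : ℕ} {F : (Fin n → ℝ) → (Fin n → ℝ)}
    (hF : IsHomogPolyMap F k) (hk : k ≠ 0) : F 0 = 0 := by
  obtain ⟨P, hP, hhom⟩ := hF
  funext i
  rw [hP]
  exact (hhom i).eval_zero hk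

theorem zero_mem_SOL {n : ℕ} {g : (Fin n → ℝ) → (Fin n → ℝ)} {q : Fin n → ℝ}
    (hq : ∀ i, 0 ≤ g 0 i + q i) : 0 ∈ SOL g q :=
  ⟨fun _ => le_rfl, hq, by simp⟩

theorem mem_SOL_of_apply_add_eq_zero {n : ℕ} {g : (Fin n → ℝ) → (Fin n → ℝ)}
    {q x : Fin n → ℝ} (hx : ∀ i, 0 ≤ x i) (h : ∀ i, g x i + q i = 0) : x ∈ SOL g q :=
  ⟨hx, fun i => (h i).ge, by simp [h]⟩

theorem stmt_13 {n m : ℕ} (hm : 2 < m)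
    (F : (Fin n → ℝ) → (Fin n → ℝ))
    (hF : IsHomogPolyMap F (m - 1)) :
    let e : Fin n → ℝ := fun _ => 1
    let d : Fin n → ℝ := fun i => -F e i - 1
    let f : (Fin n → ℝ) → (Fin n → ℝ) := fun x i => F x i + d i * x i
    (0 : Fin n → ℝ) ∈ SOL f e ∧ e ∈ SOL f e := by
  intro e d f
  have hF0 : F 0 = 0 := hF.map_zero (by omega)
  refine ⟨zero_mem_SOL fun i => ?_, mem_SOL_of_apply_add_eq_zero (fun _ => zero_le_one) fun i => ?_⟩
  · simp [f, e, hF0]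
  · simp only [f, d, e]
    ring
end

section
/- On ℝ², let F(x, y) = (x² − y² − (x−y)², x² − y² + 2(x−y)²). Then the set D := {q ∈ ℝ² : SOL(F, q) ≠ ∅} is not closed. Specifically, for every natural number k ≥ 1 the point (k + 1/(2k), k) belongs to SOL(F, q_k) where q_k = (−1, −1 − 3/(4k²)), the points q_k converge to q = (−1, −1), and SOL(F, (−1, −1)) = ∅. -/
open Finset

/-- The map of Example 3 of the paper. -/
def Fex : (Fin 2 → ℝ) → (Fin 2 → ℝ) := fun x =>
  ![x 0 ^ 2 - x 1 ^ 2 - (x 0 - x 1) ^ 2, x 0 ^ 2 - x 1 ^ 2 + 2 * (x 0 - x 1) ^ 2]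

/-!
The map is `Fex x = (2 x₁ (x₀ - x₁), (x₀ - x₁)(3 x₀ - x₁))`. Along `x = (t + 1/(2t), t)` it equals
`(1, 1 + 3/(4t²))`, which solves the problem for `q = (-1, -1 - 3/(4t²))` with `Fex x + q = 0`.
For `q = (-1, -1)` feasibility forces `x₀ > x₁ > 0`, so complementarity gives `Fex x = (1, 1)`;
but the two components differ by `3 (x₀ - x₁)² > 0`.
-/

open Filter Topology

theorem not_isClosed_of_tendsto {X ι : Type*} [TopologicalSpace X] {l : Filter ι} [l.NeBot]
    {s : Set X} {u : ι → X} {a : X} (hu : Tendsto u l (𝓝 a)) (hs : ∀ᶠ i in l, u i ∈ s)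
    (ha : a ∉ s) : ¬ IsClosed s :=
  fun h => ha (h.mem_of_tendsto hu hs)

section SOL

variable {n : ℕ} {g : (Fin n → ℝ) → (Fin n → ℝ)} {q x : Fin n → ℝ}

theorem mem_SOL_of_add_eq_zero (hx : ∀ i, 0 ≤ x i) (h : g x + q = 0) : x ∈ SOL g q := by
  have h' (i : Fin n) : g x i + q i = 0 := congrFun h i
  exact ⟨hx, fun i => (h' i).ge, by simp [h']⟩

theorem mul_eq_zero_of_mem_SOL (hx : x ∈ SOL g q) (i : Fin n) : x i * (g x i + q i) = 0 := by
  obtain ⟨hx, hgq, hsum⟩ := hx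
  exact (sum_eq_zero_iff_of_nonneg fun j _ => mul_nonneg (hx j) (hgq j)).1 hsum i (mem_univ i)

end SOL

theorem Fex_apply_zero (x : Fin 2 → ℝ) : Fex x 0 = 2 * x 1 * (x 0 - x 1) := by
  simp only [Fex, Matrix.cons_val_zero]
  ring

theorem Fex_apply_one (x : Fin 2 → ℝ) : Fex x 1 = Fex x 0 + 3 * (x 0 - x 1) ^ 2 := by
  simp only [Fex, Matrix.cons_val_zero, Matrix.cons_val_one]
  ring

theorem Fex_add_eq_zero {t : ℝ} (ht : t ≠ 0) :
    Fex ![t + 1 / (2 * t), t] + ![-1, -1 - 3 / (4 * t ^ 2)] = 0 := by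
  have h0 : Fex ![t + 1 / (2 * t), t] 0 = 1 := by
    rw [Fex_apply_zero]
    simp only [Matrix.cons_val_zero, Matrix.cons_val_one]
    field_simp
    ring
  ext i
  fin_cases i
  · simp only [Fin.zero_eta, Pi.add_apply, h0, Matrix.cons_val_zero, Pi.zero_apply]
    ring
  · simp only [Fin.mk_one, Pi.add_apply, Fex_apply_one, h0, Matrix.cons_val_zero,
      Matrix.cons_val_one, Pi.zero_apply]
    field_simp
    ring

theorem mem_SOL_Fex {t : ℝ} (ht : 0 < t) :
    ![t + 1 / (2 * t), t] ∈ SOL Fex ![-1, -1 - 3 / (4 * t ^ 2)] := by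
  refine mem_SOL_of_add_eq_zero (fun i => ?_) (Fex_add_eq_zero ht.ne')
  fin_cases i <;> simp <;> positivity

theorem SOL_Fex_neg_one_eq_empty : SOL Fex ![-1, -1] = ∅ := by
  refine Set.eq_empty_of_forall_notMem fun x hx => ?_
  have hfeas : 1 ≤ 2 * x 1 * (x 0 - x 1) := by
    have := hx.2.1 0
    simp only [Fex_apply_zero, Matrix.cons_val_zero] at this
    linarith
  obtain ⟨hx1, hx01⟩ : 0 < x 1 ∧ 0 < x 0 - x 1 := by
    refine (pos_and_pos_or_neg_and_neg_of_mul_pos (a := x 1) (by linarith)).resolve_right ?_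
    exact fun h => (hx.1 1).not_gt h.1
  have hF0 : Fex x 0 = 1 := by
    have := mul_eq_zero_of_mem_SOL hx 0
    simp only [Matrix.cons_val_zero] at this
    linarith [(mul_eq_zero.1 this).resolve_left (by linarith)]
  have hF1 : Fex x 1 = 1 := by
    have := mul_eq_zero_of_mem_SOL hx 1
    simp only [Matrix.cons_val_one, Matrix.cons_val_zero] at this
    linarith [(mul_eq_zero.1 this).resolve_left hx1.ne']
  rw [Fex_apply_one, hF0] at hF1
  nlinarith

theorem tendsto_neg_one_sub_three_div_sq :
    Tendsto (fun k : ℕ => ![(-1 : ℝ), -1 - 3 / (4 * (k : ℝ) ^ 2)]) atTop (𝓝 ![-1, -1]) := by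
  have h : Tendsto (fun k : ℕ => 3 / (4 * (k : ℝ) ^ 2)) atTop (𝓝 0) := by
    refine tendsto_const_nhds.div_atTop (Tendsto.const_mul_atTop four_pos ?_)
    exact (tendsto_pow_atTop two_ne_zero).comp tendsto_natCast_atTop_atTop
  refine tendsto_const_nhds.matrixVecCons (Tendsto.matrixVecCons ?_ tendsto_const_nhds)
  simpa using (tendsto_const_nhds (x := (-1 : ℝ))).sub h

theorem stmt_18 :
    ¬ IsClosed {q : Fin 2 → ℝ | (SOL Fex q).Nonempty} ∧
    (∀ k : ℕ, 1 ≤ k →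
      (![(k : ℝ) + 1 / (2 * (k : ℝ)), (k : ℝ)]) ∈
        SOL Fex ![(-1 : ℝ), -1 - 3 / (4 * (k : ℝ) ^ 2)]) ∧
    Filter.Tendsto (fun k : ℕ => ![(-1 : ℝ), -1 - 3 / (4 * (k : ℝ) ^ 2)])
      Filter.atTop (nhds ![(-1 : ℝ), -1]) ∧
    SOL Fex ![(-1 : ℝ), -1] = ∅ := by
  have hsol (k : ℕ) (hk : 1 ≤ k) := mem_SOL_Fex (t := k) (by exact_mod_cast hk)
  have hq := tendsto_neg_one_sub_three_div_sq
  refine ⟨not_isClosed_of_tendsto hq ?_ ?_, hsol, hq, SOL_Fex_neg_one_eq_empty⟩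
  · filter_upwards [eventually_ge_atTop 1] with k hk using ⟨_, hsol k hk⟩
  · simp [SOL_Fex_neg_one_eq_empty]
end

section
/- Let f : ℝⁿ → ℝⁿ be continuous with the Q-property, i.e., SOL(f, p) ≠ ∅ for every p ∈ ℝⁿ. Then for every q ∈ ℝⁿ, the set {x ∈ ℝⁿ : x ≥ 0 and f(x) + q ≥ 0} has a Slater point: there exists u ∈ ℝⁿ with u > 0 (all components positive) and f(u) + q > 0 (all components positive). -/
open Finset

/-!
A solution `x` of the shifted problem `SOL(f, q - 1)` satisfies `x ≥ 0` and `f x + q ≥ 1 > 0`.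
The condition `f u + q > 0` is open by continuity, and `x` lies in the closure of the open
positive orthant, so some `u > 0` close to `x` still has `f u + q > 0`.
-/

theorem closure_setOf_forall_pos {ι : Type*} :
    closure {u : ι → ℝ | ∀ i, 0 < u i} = {u | ∀ i, 0 ≤ u i} := by
  simpa [Set.pi, closure_Ioi] using closure_pi_set (Set.univ : Set ι) fun _ => Set.Ioi (0 : ℝ)

theorem isOpen_setOf_forall_pos {ι X : Type*} [Finite ι] [TopologicalSpace X]
    {g : X → ι → ℝ} (hg : Continuous g) : IsOpen {u | ∀ i, 0 < g u i} := by
  simp only [Set.ofPred_forall]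
  exact isOpen_iInter_of_finite fun i => isOpen_lt continuous_const (continuous_apply i |>.comp hg)

theorem stmt_19 {n : ℕ} (f : (Fin n → ℝ) → (Fin n → ℝ)) (hf : Continuous f)
    (hQ : ∀ p : Fin n → ℝ, (SOL f p).Nonempty) (q : Fin n → ℝ) :
    ∃ u : Fin n → ℝ, (∀ i, 0 < u i) ∧ ∀ i, 0 < f u i + q i := by
  obtain ⟨x, hx, hfx, -⟩ := hQ (q - 1)
  have hfx_pos : ∀ i, 0 < f x i + q i := fun i => by
    have := hfx i
    simp only [Pi.sub_apply, Pi.one_apply] at this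
    linarith
  have hx_closure : x ∈ closure {u : Fin n → ℝ | ∀ i, 0 < u i} := by
    rwa [closure_setOf_forall_pos]
  obtain ⟨u, hfu, hu⟩ := mem_closure_iff.mp hx_closure _
    (isOpen_setOf_forall_pos (hf.add continuous_const)) hfx_pos
  exact ⟨u, hu, hfu⟩
end
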